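/- Let p > 0. Assume h is convex and non-increasing on (0,∞), and assume V : ℝ → ℝ and W : ℝ → ℝ are convex. Then the one-dimensional p-approximated discrete energy Ẽ_N^p is convex on the convex open set {x ∈ ℝ^N : x₁ < x₂ < ⋯ < x_N}. -/

import Mathlib

open Real Finset

/-!
Every term of the energy is convex in `x` on the convex set of increasing configurations: the
`V`- and `W`-terms are convex functions of linear forms in `x`, and since `h` is convex and
non-increasing, the `h`-term is convex as soon as every `rᵢᵖ` is concave in `x`. At the two
ends `rᵢᵖ` is linear in `x`; inside it is the power mean `((a^{-p} + b^{-p})/2)^{-1/p}` of two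
gaps, which is concave because it is a minimum of linear forms: convexity of `t ↦ t^{-1/p}` gives
`(a^{-p} + b^{-p})^{-1/p} = min_{0<θ<1} (θ^{1+1/p} a + (1-θ)^{1+1/p} b)`, the minimum being
attained at `θ = a^{-p}/(a^{-p} + b^{-p})`.
-/

/-- `rᵢᵖ = min_p(Δxᵢ, Δxᵢ₊₁) = ((Δxᵢ^{−p} + Δxᵢ₊₁^{−p})/2)^{−1/p}`, with the boundary
convention `r₁ᵖ = 2^{1/p} Δx₂` and `r_Nᵖ = 2^{1/p} Δx_N` (coming from
`Δx₁ = Δx_{N+1} = +∞`), for `N = n + 2` particles indexed from `0` to `n+1`. -/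
noncomputable def rballp (p : ℝ) (n : ℕ) (x : Fin (n + 2) → ℝ) (i : Fin (n + 2)) : ℝ :=
  if i.val = 0 then (2 : ℝ) ^ (1 / p) * (x 1 - x 0)
  else if i.val = n + 1 then (2 : ℝ) ^ (1 / p) * (x i - x (i - 1))
  else (((x i - x (i - 1)) ^ (-p) + (x (i + 1) - x i) ^ (-p)) / 2) ^ (-1 / p)

/-- The one-dimensional `p`-approximated discrete energy
`Ẽ_N^p(x) = Σᵢ wᵢ h(rᵢᵖ/wᵢ) + Σᵢ wᵢ V(xᵢ) + (1/2) Σᵢ Σ_{j≠i} wᵢwⱼ W(xᵢ − xⱼ)`,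
where `h(λ) = λ H(1/λ)`. -/
noncomputable def discreteEnergyP (p : ℝ) (n : ℕ) (w : Fin (n + 2) → ℝ) (h V W : ℝ → ℝ)
    (x : Fin (n + 2) → ℝ) : ℝ :=
  ∑ i, w i * h (rballp p n x i / w i) + ∑ i, w i * V (x i) +
    (1 / 2) * ∑ i, ∑ j ∈ Finset.univ.erase i, w i * w j * W (x i - x j)

open Set

theorem convexOn_rpow_of_nonpos {s : ℝ} (hs : s ≤ 0) :
    ConvexOn ℝ (Ioi 0) fun x : ℝ ↦ x ^ s := by
  refine ⟨convex_Ioi 0, fun x hx y hy a b ha hb hab => ?_⟩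
  have hlog : a * log x + b * log y ≤ log (a * x + b * y) := by
    simpa using strictConcaveOn_log_Ioi.concaveOn.2 hx hy ha hb hab
  have hxy : 0 < a * x + b * y := (convex_Ioi 0) hx hy ha hb hab
  simp only [smul_eq_mul]
  calc (a * x + b * y) ^ s = exp (s * log (a * x + b * y)) := by
        rw [rpow_def_of_pos hxy, mul_comm]
    _ ≤ exp (a * (s * log x) + b * (s * log y)) := exp_le_exp.2 (by nlinarith)
    _ ≤ a * exp (s * log x) + b * exp (s * log y) := convexOn_exp.2 trivial trivial ha hb hab
    _ = a * x ^ s + b * y ^ s := by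
        rw [rpow_def_of_pos hx, rpow_def_of_pos hy, mul_comm s, mul_comm s]

section NegPowerMean

variable {p : ℝ}

theorem mul_rpow_neg_div_eq (hp : 0 < p) {c t : ℝ} (hc : 0 < c) (ht : 0 < t) :
    t * (c ^ (-p) / t) ^ (-1 / p) = t ^ (1 + 1 / p) * c := by
  rw [div_rpow (rpow_nonneg hc.le _) ht.le, ← rpow_mul hc.le,
    show -p * (-1 / p) = 1 by field_simp, rpow_one, rpow_add ht, rpow_one, neg_div,
    rpow_neg ht.le]
  field_simp

theorem isLeast_rpow_neg_add_rpow_neg (hp : 0 < p) {a b : ℝ} (ha : 0 < a) (hb : 0 < b) :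
    IsLeast ((fun θ => θ ^ (1 + 1 / p) * a + (1 - θ) ^ (1 + 1 / p) * b) '' Ioo 0 1)
      ((a ^ (-p) + b ^ (-p)) ^ (-1 / p)) := by
  set A := a ^ (-p)
  set B := b ^ (-p)
  have hA : 0 < A := rpow_pos_of_pos ha _
  have hB : 0 < B := rpow_pos_of_pos hb _
  -- each linear form is a convex combination of `t ↦ t ^ (-1/p)` at `A / θ` and `B / (1 - θ)`
  have hform : ∀ θ ∈ Ioo (0 : ℝ) 1, θ ^ (1 + 1 / p) * a + (1 - θ) ^ (1 + 1 / p) * b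
      = θ * (A / θ) ^ (-1 / p) + (1 - θ) * (B / (1 - θ)) ^ (-1 / p) := fun θ hθ => by
    rw [mul_rpow_neg_div_eq hp ha hθ.1, mul_rpow_neg_div_eq hp hb (sub_pos.2 hθ.2)]
  have hθ : A / (A + B) ∈ Ioo (0 : ℝ) 1 :=
    ⟨by positivity, (div_lt_one (by positivity)).2 (by linarith)⟩
  refine ⟨⟨A / (A + B), hθ, ?_⟩, ?_⟩
  · have h1 : 1 - A / (A + B) = B / (A + B) := by field_simp; ring
    dsimp only
    rw [hform _ hθ, h1, div_div_cancel₀ hA.ne', div_div_cancel₀ hB.ne', ← add_mul, ← add_div,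
      div_self (by positivity), one_mul]
  · rintro _ ⟨θ, hθ, rfl⟩
    have h1 : 0 < 1 - θ := sub_pos.2 hθ.2
    have hs : -1 / p ≤ 0 := div_nonpos_of_nonpos_of_nonneg (by norm_num) hp.le
    have := (convexOn_rpow_of_nonpos hs).2 (x := A / θ) (y := B / (1 - θ))
      (div_pos hA hθ.1) (div_pos hB h1) hθ.1.le h1.le (by ring)
    simp only [smul_eq_mul, mul_div_cancel₀ _ hθ.1.ne', mul_div_cancel₀ _ h1.ne'] at this
    exact this.trans_eq (hform θ hθ).symm

theorem concaveOn_rpow_neg_add_rpow_neg (hp : 0 < p) :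
    ConcaveOn ℝ (Ioi (0 : ℝ) ×ˢ Ioi (0 : ℝ))
      fun z : ℝ × ℝ => (z.1 ^ (-p) + z.2 ^ (-p)) ^ (-1 / p) := by
  refine ⟨(convex_Ioi 0).prod (convex_Ioi 0), fun u hu v hv a b ha hb hab => ?_⟩
  have hz := ((convex_Ioi 0).prod (convex_Ioi 0)) hu hv ha hb hab
  obtain ⟨⟨θ, hθ, hzθ⟩, -⟩ := isLeast_rpow_neg_add_rpow_neg hp hz.1 hz.2
  have hu' := (isLeast_rpow_neg_add_rpow_neg hp hu.1 hu.2).2 ⟨θ, hθ, rfl⟩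
  have hv' := (isLeast_rpow_neg_add_rpow_neg hp hv.1 hv.2).2 ⟨θ, hθ, rfl⟩
  dsimp only at hzθ hu' hv' ⊢
  rw [← hzθ]
  simp only [smul_eq_mul, Prod.fst_add, Prod.snd_add, Prod.smul_fst, Prod.smul_snd]
  linear_combination a * hu' + b * hv'

theorem concaveOn_rpow_neg_mean (hp : 0 < p) :
    ConcaveOn ℝ (Ioi (0 : ℝ) ×ˢ Ioi (0 : ℝ))
      fun z : ℝ × ℝ => ((z.1 ^ (-p) + z.2 ^ (-p)) / 2) ^ (-1 / p) := by
  refine ((concaveOn_rpow_neg_add_rpow_neg hp).smul (c := 2 ^ (1 / p)) (by positivity)).congr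
    fun z hz => ?_
  have : 0 < z.1 ^ (-p) + z.2 ^ (-p) := add_pos (rpow_pos_of_pos hz.1 _) (rpow_pos_of_pos hz.2 _)
  dsimp only
  rw [smul_eq_mul, div_rpow this.le zero_le_two, neg_div, rpow_neg zero_le_two, div_inv_eq_mul,
    mul_comm]

end NegPowerMean

theorem convex_setOf_strictMono {ι : Type*} [Preorder ι] :
    Convex ℝ {x : ι → ℝ | StrictMono x} := by
  intro x hx y hy a b ha hb hab i j hij
  simp only [Pi.add_apply, Pi.smul_apply, smul_eq_mul]
  rcases ha.eq_or_lt with rfl | ha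
  · rw [zero_add] at hab
    simpa [hab] using hy hij
  · nlinarith [hx hij, mul_le_mul_of_nonneg_left (hy hij).le hb]

theorem convexOn_finset_sum {𝕜 E β ι : Type*} [Semiring 𝕜] [PartialOrder 𝕜] [AddCommMonoid E]
    [AddCommMonoid β] [PartialOrder β] [IsOrderedAddMonoid β] [SMul 𝕜 E] [Module 𝕜 β]
    {s : Set E} (hs : Convex 𝕜 s) (t : Finset ι) {f : ι → E → β}
    (hf : ∀ i ∈ t, ConvexOn 𝕜 s (f i)) : ConvexOn 𝕜 s fun x => ∑ i ∈ t, f i x := by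
  simp_rw [← Finset.sum_apply]
  exact Finset.sum_induction _ (ConvexOn 𝕜 s) (fun _ _ => ConvexOn.add) (convexOn_const 0 hs) hf

theorem ConvexOn.comp_concaveOn_of_mapsTo {E : Type*} [AddCommMonoid E] [Module ℝ E]
    {s : Set E} {t : Set ℝ} {f : E → ℝ} {g : ℝ → ℝ} (hg : ConvexOn ℝ t g)
    (hg' : AntitoneOn g t) (hf : ConcaveOn ℝ s f) (hfst : MapsTo f s t) :
    ConvexOn ℝ s (g ∘ f) :=
  ⟨hf.1, fun _ hx _ hy _ _ ha hb hab =>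
    (hg' (hg.1 (hfst hx) (hfst hy) ha hb hab) (hfst (hf.1 hx hy ha hb hab))
      (hf.2 hx hy ha hb hab)).trans (hg.2 (hfst hx) (hfst hy) ha hb hab)⟩

section Configuration

variable {n : ℕ} {x : Fin (n + 2) → ℝ} {i : Fin (n + 2)}

theorem StrictMono.sub_sub_one_pos (hx : StrictMono x) (h0 : i.val ≠ 0) : 0 < x i - x (i - 1) :=
  sub_pos.2 (hx (Fin.sub_one_lt_iff.2 (Fin.pos_iff_ne_zero.2 fun h => h0 (h ▸ rfl))))

theorem StrictMono.add_one_sub_pos (hx : StrictMono x) (hN : i.val ≠ n + 1) : 0 < x (i + 1) - x i :=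
  sub_pos.2 (hx (Fin.lt_add_one_iff.2 (Fin.lt_last_iff_ne_last.2 fun h => hN (h ▸ rfl))))

theorem rballp_pos (p : ℝ) (hx : StrictMono x) (i : Fin (n + 2)) : 0 < rballp p n x i := by
  unfold rballp
  split_ifs with h0 hN
  · exact mul_pos (rpow_pos_of_pos two_pos _) (sub_pos.2 (hx Fin.zero_lt_one))
  · exact mul_pos (rpow_pos_of_pos two_pos _) (hx.sub_sub_one_pos h0)
  · have := hx.sub_sub_one_pos h0
    have := hx.add_one_sub_pos hN
    positivity

theorem concaveOn_rballp {p : ℝ} (hp : 0 < p) (i : Fin (n + 2)) :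
    ConcaveOn ℝ {x | StrictMono x} fun x => rballp p n x i := by
  unfold rballp
  by_cases h0 : i.val = 0
  · simp only [if_pos h0]
    exact ⟨convex_setOf_strictMono, fun x _ y _ a b _ _ _ => le_of_eq (by
      simp only [Pi.add_apply, Pi.smul_apply, smul_eq_mul]; ring)⟩
  by_cases hN : i.val = n + 1
  · simp only [if_neg h0, if_pos hN]
    exact ⟨convex_setOf_strictMono, fun x _ y _ a b _ _ _ => le_of_eq (by
      simp only [Pi.add_apply, Pi.smul_apply, smul_eq_mul]; ring)⟩
  simp only [if_neg h0, if_neg hN]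
  refine ⟨convex_setOf_strictMono, fun x hx y hy a b ha hb hab => ?_⟩
  have := (concaveOn_rpow_neg_mean hp).2 (x := (x i - x (i - 1), x (i + 1) - x i))
    (y := (y i - y (i - 1), y (i + 1) - y i)) ⟨hx.sub_sub_one_pos h0, hx.add_one_sub_pos hN⟩
    ⟨hy.sub_sub_one_pos h0, hy.add_one_sub_pos hN⟩ ha hb hab
  have hgap : ∀ j k, (a • x + b • y) j - (a • x + b • y) k = a * (x j - x k) + b * (y j - y k) :=
    fun j k => by simp only [Pi.add_apply, Pi.smul_apply, smul_eq_mul]; ring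
  simpa only [smul_eq_mul, Prod.smul_mk, Prod.mk_add_mk, hgap] using this

end Configuration

theorem convexOn_discreteEnergyP {p : ℝ} (hp : 0 < p) {n : ℕ} {w : Fin (n + 2) → ℝ}
    (hw : ∀ i, 0 < w i) {h V W : ℝ → ℝ}
    (hconv : ConvexOn ℝ (Set.Ioi (0 : ℝ)) h) (hanti : AntitoneOn h (Set.Ioi (0 : ℝ)))
    (hV : ConvexOn ℝ Set.univ V) (hW : ConvexOn ℝ Set.univ W) :
    ConvexOn ℝ {x | StrictMono x} (discreteEnergyP p n w h V W) := by
  have hS : Convex ℝ {x : Fin (n + 2) → ℝ | StrictMono x} := convex_setOf_strictMono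
  have hball : ConvexOn ℝ {x | StrictMono x} fun x => ∑ i, w i * h (rballp p n x i / w i) := by
    refine convexOn_finset_sum hS _ fun i _ => ?_
    have hr : ConcaveOn ℝ {x | StrictMono x} fun x => rballp p n x i / w i :=
      ((concaveOn_rballp hp i).smul (inv_nonneg.2 (hw i).le)).congr fun x _ => by
        simp only [smul_eq_mul, div_eq_inv_mul]
    exact (hconv.comp_concaveOn_of_mapsTo hanti hr
      fun x hx => div_pos (rballp_pos p hx i) (hw i)).smul (hw i).le
  have hpot : ConvexOn ℝ {x | StrictMono x} fun x => ∑ i, w i * V (x i) :=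
    convexOn_finset_sum hS _ fun i _ =>
      ((hV.comp_linearMap (LinearMap.proj i : (Fin (n + 2) → ℝ) →ₗ[ℝ] ℝ)).subset
        (subset_univ _) hS).smul (hw i).le
  have hint : ConvexOn ℝ {x | StrictMono x}
      fun x => (1 / 2) * ∑ i, ∑ j ∈ Finset.univ.erase i, w i * w j * W (x i - x j) := by
    refine (convexOn_finset_sum hS _ fun i _ => convexOn_finset_sum hS _ fun j _ => ?_).smul
      (by norm_num : (0 : ℝ) ≤ 1 / 2)
    have hWij := (hW.comp_linearMap ((LinearMap.proj i : (Fin (n + 2) → ℝ) →ₗ[ℝ] ℝ) -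
      LinearMap.proj j)).subset (subset_univ _) hS
    exact (hWij.congr fun x _ => by simp).smul (mul_pos (hw i) (hw j)).le
  exact (hball.add hpot).add hint

theorem discreteEnergyP_convex_general (p : ℝ) (hp : 0 < p) (n : ℕ) (w : Fin (n + 2) → ℝ)
    (hw : ∀ i, 0 < w i) (h V W : ℝ → ℝ)
    (hconv : ConvexOn ℝ (Set.Ioi (0 : ℝ)) h) (hanti : AntitoneOn h (Set.Ioi (0 : ℝ)))
    (hV : ConvexOn ℝ Set.univ V) (hW : ConvexOn ℝ Set.univ W)
    (x y : Fin (n + 2) → ℝ) (hx : StrictMono x) (hy : StrictMono y)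
    (l : ℝ) (hl0 : 0 ≤ l) (hl1 : l ≤ 1) :
    discreteEnergyP p n w h V W (fun i => l * x i + (1 - l) * y i) ≤
      l * discreteEnergyP p n w h V W x + (1 - l) * discreteEnergyP p n w h V W y :=
  (convexOn_discreteEnergyP hp hw hconv hanti hV hW).2 hx hy hl0 (sub_nonneg.2 hl1)
    (add_sub_cancel l 1)

/-- let `p > 0`; if `h` is convex and non-increasing on `(0,∞)` and
`V, W : ℝ → ℝ` are convex, then the one-dimensional `p`-approximated discrete energy
`Ẽ_N^p` is convex on the set of strictly increasing configurations `x₁ < ⋯ < x_N`. -/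
theorem discreteEnergyP_convex (p : ℝ) (hp : 0 < p) (n : ℕ) (w : Fin (n + 2) → ℝ)
    (hw : ∀ i, 0 < w i) (hw1 : ∑ i, w i = 1) (h V W : ℝ → ℝ)
    (hconv : ConvexOn ℝ (Set.Ioi (0 : ℝ)) h) (hanti : AntitoneOn h (Set.Ioi (0 : ℝ)))
    (hV : ConvexOn ℝ Set.univ V) (hW : ConvexOn ℝ Set.univ W)
    (x y : Fin (n + 2) → ℝ) (hx : StrictMono x) (hy : StrictMono y)
    (l : ℝ) (hl0 : 0 ≤ l) (hl1 : l ≤ 1) :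
    discreteEnergyP p n w h V W (fun i => l * x i + (1 - l) * y i) ≤
      l * discreteEnergyP p n w h V W x + (1 - l) * discreteEnergyP p n w h V W y :=
  discreteEnergyP_convex_general p hp n w hw h V W hconv hanti hV hW x y hx hy l hl0 hl1
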